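/- arXiv:1910.11854 — 2 statements merged into one kernel-verified Lean document; each statement's English description precedes it below -/
import Mathlib

section
/- Let R be a commutative ring and let g, h_1, …, h_n be polynomials in R[x_1, …, x_n] with 2 ≤ m ≤ n. If g divides each of h_1, …, h_m, then g^{m-1} divides the determinant of the Jacobian matrix J(h_1, …, h_n) = (∂h_i/∂x_j)_{1≤i,j≤n}. -/
open MvPolynomial

/-- Pulling out a common factor `g` from rows indexed by a finset `T`. -/
private theorem pow_card_dvd_alternating {S : Type*} [CommRing S] {n : ℕ}
    (g : S) (T : Finset (Fin n)) :
    ∀ w : Fin n → Fin n → S, (∀ i ∈ T, ∃ c : Fin n → S, w i = g • c) →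
      g ^ T.card ∣ Matrix.detRowAlternating w := by
  classical
  induction T using Finset.induction_on with
  | empty => intro w _; simp
  | @insert i T hiT ih =>
    intro w hw
    obtain ⟨c, hc⟩ := hw i (Finset.mem_insert_self i T)
    have hupd : w = Function.update w i (g • c) := by
      rw [← hc, Function.update_eq_self]
    have : Matrix.detRowAlternating w
        = g * Matrix.detRowAlternating (Function.update w i c) := by
      conv_lhs => rw [hupd]
      rw [show (Function.update w i (g • c)) = Function.update (Function.update w i c) i (g • c) by
        simp [Function.update_idem],
        (Matrix.detRowAlternating : ((Fin n → S) [⋀^Fin n]→ₗ[S] S)).map_update_smul]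
      simp [smul_eq_mul]
    rw [this, Finset.card_insert_of_notMem hiT, pow_succ, mul_comm (g ^ T.card) g]
    refine mul_dvd_mul_left g (ih _ fun k hk => ?_)
    obtain ⟨c', hc'⟩ := hw k (Finset.mem_insert_of_mem hk)
    refine ⟨c', ?_⟩
    rw [Function.update_of_ne (by rintro rfl; exact hiT hk) _ _, hc']

/-- If `g` divides each of `h 0, …, h (m-1)` (with `2 ≤ m ≤ n`), then `g^(m-1)` divides the
determinant of the Jacobian matrix `(∂ h i / ∂ x j)`. -/
theorem jacobian_det_dvd {R : Type*} [CommRing R] {n m : ℕ}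
    (g : MvPolynomial (Fin n) R) (h : Fin n → MvPolynomial (Fin n) R)
    (hm2 : 2 ≤ m) (hmn : m ≤ n)
    (hdvd : ∀ i : Fin n, (i : ℕ) < m → g ∣ h i) :
    g ^ (m - 1) ∣ (Matrix.of fun i j : Fin n => pderiv j (h i)).det := by
  classical
  let S := MvPolynomial (Fin n) R
  set f : ((Fin n → S) [⋀^Fin n]→ₗ[S] S) := Matrix.detRowAlternating with hf
  choose q hq using fun (i : Fin n) (hi : (i : ℕ) < m) => hdvd i hi
  set Q : Fin n → S := fun i => if hi : (i : ℕ) < m then q i hi else 0 with hQ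
  have hQ' : ∀ i : Fin n, (i : ℕ) < m → h i = g * Q i := by
    intro i hi
    simp only [hQ, dif_pos hi]
    exact hq i hi
  set Dg : Fin n → S := fun j => pderiv j g with hDg
  set u : Fin n → Fin n → S := fun i =>
    if (i : ℕ) < m then g • fun j => pderiv j (Q i) else fun j => pderiv j (h i) with hu
  set v : Fin n → Fin n → S := fun i => if (i : ℕ) < m then Q i • Dg else 0 with hv
  have hrows : (fun i j : Fin n => pderiv j (h i)) = u + v := by
    funext i j
    by_cases hi : (i : ℕ) < m
    · simp only [Pi.add_apply, hu, hv, if_pos hi, Pi.smul_apply, smul_eq_mul, hDg]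
      rw [hQ' i hi, pderiv_mul]
      ring
    · simp [hu, hv, if_neg hi]
  have hdet : (Matrix.of fun i j : Fin n => pderiv j (h i)).det
      = ∑ s : Finset (Fin n), f (s.piecewise u v) := by
    show f (fun i j : Fin n => pderiv j (h i)) = _
    rw [hrows]
    exact f.toMultilinearMap.map_add_univ u v
  rw [hdet]
  refine Finset.dvd_sum fun s _ => ?_
  set w : Fin n → Fin n → S := s.piecewise u v with hw
  by_cases hA : ∃ i : Fin n, i ∉ s ∧ m ≤ (i : ℕ)
  · obtain ⟨i, his, him⟩ := hA
    have : w i = 0 := by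
      simp [hw, Finset.piecewise_eq_of_notMem _ _ _ his, hv, Nat.not_lt.mpr him]
    rw [f.map_coord_zero i this]
    exact dvd_zero _
  push_neg at hA
  by_cases hB : 2 ≤ sᶜ.card
  · obtain ⟨i, hi, k, hk, hik⟩ := Finset.one_lt_card.mp hB
    rw [Finset.mem_compl] at hi hk
    have hwi : w i = Q i • Dg := by
      simp [hw, Finset.piecewise_eq_of_notMem _ _ _ hi, hv, hA i hi]
    have hwk : w k = Q k • Dg := by
      simp [hw, Finset.piecewise_eq_of_notMem _ _ _ hk, hv, hA k hk]
    have h1 : f w = Q i • f (Function.update w i Dg) := by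
      conv_lhs => rw [show w = Function.update w i (Q i • Dg) by
        rw [← hwi, Function.update_eq_self]]
      rw [show Function.update w i (Q i • Dg)
          = Function.update (Function.update w i Dg) i (Q i • Dg) by
        simp [Function.update_idem], f.map_update_smul]
      simp [Function.update_idem]
    have h2 : f (Function.update w i Dg) = Q k • f
        (Function.update (Function.update w i Dg) k Dg) := by
      have hwk' : Function.update w i Dg k = Q k • Dg := by
        rw [Function.update_of_ne (Ne.symm hik), hwk]
      conv_lhs => rw [show Function.update w i Dg
          = Function.update (Function.update w i Dg) k (Q k • Dg) by
        rw [← hwk', Function.update_eq_self]]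
      rw [show Function.update (Function.update w i Dg) k (Q k • Dg)
          = Function.update (Function.update (Function.update w i Dg) k Dg) k (Q k • Dg) by
        simp [Function.update_idem], f.map_update_smul]
      simp [Function.update_idem]
    have h3 : f (Function.update (Function.update w i Dg) k Dg) = 0 := by
      refine f.map_eq_zero_of_eq _ (i := i) (j := k) ?_ hik
      rw [Function.update_of_ne hik, Function.update_self, Function.update_self]
    rw [h1, h2, h3]
    simp
  · -- at most one missing index; pull out g from at least m-1 rows
    push_neg at hB
    set T : Finset (Fin n) := s.filter (fun i => (i : ℕ) < m) with hT
    have hTdvd : g ^ T.card ∣ f w := by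
      refine pow_card_dvd_alternating g T w fun i hi => ?_
      rw [hT, Finset.mem_filter] at hi
      refine ⟨fun j => pderiv j (Q i), ?_⟩
      simp [hw, Finset.piecewise_eq_of_mem _ _ _ hi.1, hu, hi.2]
    refine dvd_trans (pow_dvd_pow g ?_) hTdvd
    -- m - 1 ≤ T.card
    have hAcard : (Finset.univ.filter (fun i : Fin n => (i : ℕ) < m)).card = m := by
      rw [show Finset.univ.filter (fun i : Fin n => (i : ℕ) < m)
          = (Finset.univ : Finset (Fin m)).map (Fin.castLEEmb hmn) by
        ext i
        simp only [Finset.mem_filter, Finset.mem_univ, true_and, Finset.mem_map,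
          Fin.castLEEmb_apply]
        constructor
        · intro hi; exact ⟨⟨(i : ℕ), hi⟩, rfl⟩
        · rintro ⟨j, rfl⟩; exact j.isLt]
      simp
    have hsub : Finset.univ.filter (fun i : Fin n => (i : ℕ) < m) ⊆ T ∪ sᶜ := by
      intro i hi
      rw [Finset.mem_filter] at hi
      by_cases his : i ∈ s
      · exact Finset.mem_union_left _ (Finset.mem_filter.mpr ⟨his, hi.2⟩)
      · exact Finset.mem_union_right _ (Finset.mem_compl.mpr his)
    have := Finset.card_le_card hsub
    rw [hAcard] at this
    have := this.trans (Finset.card_union_le _ _)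
    omega
end

section
/- Let h_0, h_1, h_2, h_3 be homogeneous polynomials of degree d ≥ 1 in x_0, x_1, x_2, x_3 over a field of characteristic zero. Then, as an identity of rational functions, det J(h_0/h_1, h_2/h_0, h_3/h_0)_{x_1,x_2,x_3} = (−x_0 / ((h_0 h_1)^2 · d)) · det J(h_0, h_1, h_2, h_3)_{x_0,x_1,x_2,x_3}. -/
open MvPolynomial

theorem euler_aux {K : Type*} [CommRing K] {d : ℕ} (p : MvPolynomial (Fin 4) K)
    (hp : p.IsHomogeneous d) :
    ∑ j : Fin 4, X j * pderiv j p = (d : MvPolynomial (Fin 4) K) * p := by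
  conv_lhs => rw [p.as_sum]
  conv_rhs => rw [p.as_sum]
  rw [Finset.mul_sum]
  simp_rw [map_sum, Finset.mul_sum]
  rw [Finset.sum_comm]
  refine Finset.sum_congr rfl fun s hs => ?_
  have hdeg : (Finsupp.weight 1) s = d := hp (mem_support_iff.mp hs)
  have hdeg' : ∑ j : Fin 4, s j = d := by
    rw [← hdeg, Finsupp.weight_apply, Finsupp.sum_fintype] <;> simp
  simp_rw [pderiv_monomial, X, monomial_mul, one_mul]
  have key : ∀ j : Fin 4, (monomial (Finsupp.single j 1 + (s - Finsupp.single j 1))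
      (coeff s p * (s j : K))) = monomial s (coeff s p * (s j : K)) := by
    intro j
    rcases Nat.eq_zero_or_pos (s j) with hj | hj
    · rw [hj]; simp
    · have : Finsupp.single j 1 + (s - Finsupp.single j 1) = s := by
        ext k
        by_cases hk : k = j
        · subst hk; simp [Finsupp.single_apply]; omega
        · simp [Finsupp.single_apply, hk, Ne.symm hk]
      rw [this]
  simp_rw [key, ← map_sum, ← Finset.mul_sum, ← Nat.cast_sum, hdeg']
  rw [← map_natCast (C : K →+* MvPolynomial (Fin 4) K), C_mul_monomial, mul_comm]

theorem det_fin_four_aux {R : Type*} [CommRing R] (A : Matrix (Fin 4) (Fin 4) R) :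
    A.det =
      A 0 0 * (A 1 1 * (A 2 2 * A 3 3 - A 2 3 * A 3 2) - A 1 2 * (A 2 1 * A 3 3 - A 2 3 * A 3 1)
        + A 1 3 * (A 2 1 * A 3 2 - A 2 2 * A 3 1))
      - A 0 1 * (A 1 0 * (A 2 2 * A 3 3 - A 2 3 * A 3 2) - A 1 2 * (A 2 0 * A 3 3 - A 2 3 * A 3 0)
        + A 1 3 * (A 2 0 * A 3 2 - A 2 2 * A 3 0))
      + A 0 2 * (A 1 0 * (A 2 1 * A 3 3 - A 2 3 * A 3 1) - A 1 1 * (A 2 0 * A 3 3 - A 2 3 * A 3 0)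
        + A 1 3 * (A 2 0 * A 3 1 - A 2 1 * A 3 0))
      - A 0 3 * (A 1 0 * (A 2 1 * A 3 2 - A 2 2 * A 3 1) - A 1 1 * (A 2 0 * A 3 2 - A 2 2 * A 3 0)
        + A 1 2 * (A 2 0 * A 3 1 - A 2 1 * A 3 0)) := by
  simp only [Matrix.det_succ_row_zero, ← Nat.not_even_iff_odd, Matrix.submatrix_apply,
    Fin.succ_zero_eq_one, Matrix.submatrix_submatrix, Matrix.det_unique, Fin.default_eq_zero,
    Function.comp_apply, Fin.succ_one_eq_two, Fin.sum_univ_succ, Fin.val_zero, Fin.zero_succAbove,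
    Finset.univ_unique, Fin.val_succ, Fin.val_eq_zero, Fin.succ_succAbove_zero,
    Finset.sum_singleton, Fin.succ_succAbove_one, Even.add_self, Fin.succ_succAbove_succ]
  simp only [show (Fin.succ 2 : Fin 4) = 3 by decide, show ((1:Fin 4).succAbove 2) = 3 by decide,
    show ((2:Fin 4).succAbove 2) = 3 by decide, show ((3:Fin 4).succAbove 2) = 2 by decide,
    show (Fin.castSucc 2 : Fin 4) = 2 by decide]
  norm_num
  ring

noncomputable section

/-- The canonical map from polynomials in `x_0,…,x_3` to rational functions. -/
def toFrac (K : Type*) [Field K] :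
    MvPolynomial (Fin 4) K →+* FractionRing (MvPolynomial (Fin 4) K) :=
  algebraMap _ _

/-- The formal partial derivative of the rational function `p / q` with respect to `x_j`,
computed by the quotient rule. -/
def quotDeriv {K : Type*} [Field K] (p q : MvPolynomial (Fin 4) K) (j : Fin 4) :
    FractionRing (MvPolynomial (Fin 4) K) :=
  toFrac K (q * pderiv j p - p * pderiv j q) / (toFrac K q) ^ 2

set_option maxHeartbeats 1000000 in
set_option synthInstance.maxHeartbeats 200000 in
/-- For homogeneous `h 0, …, h 3` of degree `d ≥ 1` over a field of characteristic zero with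
`h 0, h 1 ≠ 0`, the `3×3` Jacobian determinant of the rational functions
`h 0 / h 1, h 2 / h 0, h 3 / h 0` with respect to `x_1, x_2, x_3` equals
`(- x_0 / ((h 0 * h 1)^2 * d))` times the `4×4` Jacobian determinant of `h 0, …, h 3`. -/
theorem jacobian_det_of_quotients {K : Type*} [Field K] [CharZero K]
    {d : ℕ} (hd : 1 ≤ d) (h : Fin 4 → MvPolynomial (Fin 4) K)
    (hhom : ∀ i, (h i).IsHomogeneous d) (h0 : h 0 ≠ 0) (h1 : h 1 ≠ 0) :
    (Matrix.of fun i j : Fin 3 =>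
        (![quotDeriv (h 0) (h 1), quotDeriv (h 2) (h 0), quotDeriv (h 3) (h 0)] i) j.succ).det
      = (- toFrac K (X 0) / ((toFrac K (h 0) * toFrac K (h 1)) ^ 2 * (d : _))) *
        toFrac K (Matrix.of fun i j : Fin 4 => pderiv j (h i)).det := by
  have hinj : Function.Injective (toFrac K) :=
    IsFractionRing.injective (MvPolynomial (Fin 4) K) _
  have H0 : toFrac K (h 0) ≠ 0 := fun hh => h0 (hinj (by simpa using hh))
  have H1 : toFrac K (h 1) ≠ 0 := fun hh => h1 (hinj (by simpa using hh))
  have X0 : toFrac K (X 0 : MvPolynomial (Fin 4) K) ≠ 0 := fun hh =>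
    X_ne_zero (0 : Fin 4) (hinj (by simpa using hh))
  have hD : ((d : FractionRing (MvPolynomial (Fin 4) K))) ≠ 0 := by
    have hd' : (d : MvPolynomial (Fin 4) K) ≠ 0 := Nat.cast_ne_zero.mpr (by omega)
    intro hh
    exact hd' (hinj (by rw [map_natCast, map_zero]; exact hh))
  have E : ∀ i : Fin 4, toFrac K (pderiv 0 (h i)) =
      ((d : FractionRing (MvPolynomial (Fin 4) K)) * toFrac K (h i)
        - toFrac K (X 1 : MvPolynomial (Fin 4) K) * toFrac K (pderiv 1 (h i))
        - toFrac K (X 2 : MvPolynomial (Fin 4) K) * toFrac K (pderiv 2 (h i))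
        - toFrac K (X 3 : MvPolynomial (Fin 4) K) * toFrac K (pderiv 3 (h i)))
        / toFrac K (X 0 : MvPolynomial (Fin 4) K) := by
    intro i
    have := congrArg (toFrac K) (euler_aux (h i) (hhom i))
    rw [map_sum, map_mul] at this
    simp only [Fin.sum_univ_four, map_mul, map_natCast] at this
    field_simp
    linear_combination this
  rw [RingHom.map_det, det_fin_four_aux, Matrix.det_fin_three]
  simp only [RingHom.mapMatrix_apply, Matrix.map_apply, Matrix.of_apply, Matrix.cons_val_zero,
    Matrix.cons_val_one, Matrix.head_cons, Matrix.cons_val_two, Matrix.tail_cons,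
    Fin.succ_zero_eq_one, Fin.succ_one_eq_two, show ((2:Fin 3).succ = 3) by decide,
    quotDeriv, map_sub, map_mul]
  rw [E 0, E 1, E 2, E 3]
  field_simp
  ring

end
end
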